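/- For every t > 0 and every v ∈ ℝ: ∫_ℝ exp(−(1/2)·tanh(2t)·(x² + v²)) · exp(−i·S(t)·x·v) dx = √π · √(coth(t) + tanh(t)) · exp(−tanh(t)·v²), where S(t) := 2·sinh²(t)/cosh(2t) = 2 sinh²t/(cosh²t + sinh²t). -/

import Mathlib

/-!
Writing the integrand as `exp (-b v²) · exp (i (-S v) x) · exp (-b x²)` with
`b = tanh (2t) / 2`, the integral is the Fourier transform of a Gaussian,
`√(π / b) · exp (-(b + S² / (4b)) v²)`. Two double-angle identities finish:
`1 / b = coth t + tanh t` and `b + S² / (4b) = tanh t`.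
-/

open MeasureTheory

open Complex in
theorem integral_cexp_neg_mul_sq_add_sq_mul_cexp_neg_I_mul {b : ℂ} (hb : 0 < b.re) (c v : ℂ) :
    ∫ x : ℝ, cexp (-b * (x ^ 2 + v ^ 2)) * cexp (-(I * c * x * v)) =
      (Real.pi / b) ^ (1 / 2 : ℂ) * cexp (-(b + c ^ 2 / (4 * b)) * v ^ 2) := by
  have hb0 : b ≠ 0 := by rintro rfl; simp at hb
  have hsplit : ∀ x : ℝ, cexp (-b * (x ^ 2 + v ^ 2)) * cexp (-(I * c * x * v)) =
      cexp (-b * v ^ 2) * (cexp (I * (-c * v) * x) * cexp (-b * x ^ 2)) := fun x => by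
    simp only [← Complex.exp_add]; ring_nf
  simp_rw [hsplit, integral_const_mul, fourierIntegral_gaussian hb, mul_left_comm,
    ← Complex.exp_add]
  congr 2
  field_simp
  ring

theorem Complex.ofReal_cpow_one_half {r : ℝ} (hr : 0 ≤ r) :
    (r : ℂ) ^ (1 / 2 : ℂ) = √r := by
  rw [Real.sqrt_eq_rpow, Complex.ofReal_cpow hr]
  norm_num

namespace Real

theorem two_div_tanh_two_mul (t : ℝ) : 2 / tanh (2 * t) = cosh t / sinh t + tanh t := by
  rcases eq_or_ne t 0 with rfl | ht
  · simp
  have hs : sinh t ≠ 0 := sinh_ne_zero.2 ht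
  have hc : cosh t ≠ 0 := (cosh_pos t).ne'
  rw [tanh_eq_sinh_div_cosh, tanh_eq_sinh_div_cosh, sinh_two_mul, cosh_two_mul]
  field_simp

theorem tanh_two_mul_div_two_add (t : ℝ) :
    tanh (2 * t) / 2 + (2 * sinh t ^ 2 / cosh (2 * t)) ^ 2 / (4 * (tanh (2 * t) / 2)) = tanh t := by
  rcases eq_or_ne t 0 with rfl | ht
  · simp
  have hs : sinh t ≠ 0 := sinh_ne_zero.2 ht
  have hc : 0 < cosh t := cosh_pos t
  have hC : cosh t ^ 2 + sinh t ^ 2 ≠ 0 := by positivity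
  rw [tanh_eq_sinh_div_cosh, tanh_eq_sinh_div_cosh, sinh_two_mul, cosh_two_mul]
  field_simp
  ring

end Real

/-- For `t > 0` and `v ∈ ℝ`, with `S(t) := 2 sinh²(t)/cosh(2t)`:
`∫ e^{−(1/2) tanh(2t)(x²+v²)} e^{−i S(t) x v} dx = √π √(coth t + tanh t) e^{−tanh(t) v²}`. -/
theorem stmt_17 (t : ℝ) (ht : 0 < t) (v : ℝ) :
    ∫ x : ℝ, Complex.exp (-(1 / 2 : ℂ) * ((Real.tanh (2 * t) : ℝ) : ℂ) *
          (((x : ℂ)) ^ 2 + ((v : ℂ)) ^ 2)) *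
        Complex.exp (-(Complex.I *
          ((2 * Real.sinh t ^ 2 / Real.cosh (2 * t) : ℝ) : ℂ) * (x : ℂ) * (v : ℂ)))
      = ((Real.sqrt Real.pi : ℝ) : ℂ) *
          ((Real.sqrt (Real.cosh t / Real.sinh t + Real.tanh t) : ℝ) : ℂ) *
          Complex.exp (-((Real.tanh t : ℝ) : ℂ) * ((v : ℂ)) ^ 2) := by
  have hb : 0 < Real.tanh (2 * t) / 2 := by
    rw [Real.tanh_eq_sinh_div_cosh]
    have := Real.sinh_pos_iff.2 (by positivity : 0 < 2 * t)
    have := Real.cosh_pos (2 * t)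
    positivity
  have hgauss := integral_cexp_neg_mul_sq_add_sq_mul_cexp_neg_I_mul
    (b := (Real.tanh (2 * t) / 2 : ℝ)) (by rwa [Complex.ofReal_re])
    (2 * Real.sinh t ^ 2 / Real.cosh (2 * t) : ℝ) v
  convert hgauss using 3
  · congr 2
    rw [Complex.ofReal_div, Complex.ofReal_ofNat]
    ring
  · rw [← Complex.ofReal_div, Complex.ofReal_cpow_one_half (by positivity), div_div_eq_mul_div,
      mul_div_assoc, Real.two_div_tanh_two_mul, Real.sqrt_mul Real.pi_pos.le, Complex.ofReal_mul]
  · congr 2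
    exact_mod_cast (Real.tanh_two_mul_div_two_add t).symm
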